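/- arXiv:2209.02505 — 5 statements merged into one kernel-verified Lean document; each statement's English description precedes it below -/
import Mathlib

section
/- Let f(s) = a₃s³ + a₂s² + a₁s + a₀ be a real cubic polynomial with a₃ > 0. Then all (complex) roots of f have nonpositive real part if and only if a₂ ≥ 0, a₁ ≥ 0, a₀ ≥ 0, and a₁a₂ - a₀a₃ ≥ 0. -/
open Complex

lemma exists_real_root (a₀ a₁ a₂ a₃ : ℝ) (ha₃ : 0 < a₃) :
    ∃ r : ℝ, a₃*r^3 + a₂*r^2 + a₁*r + a₀ = 0 := by
  obtain ⟨M, hM1, hMa⟩ : ∃ M : ℝ, 1 ≤ M ∧ a₃ * M = |a₀| + |a₁| + |a₂| + a₃ := by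
    refine ⟨(|a₀| + |a₁| + |a₂|)/a₃ + 1, ?_, ?_⟩
    · have : 0 ≤ (|a₀| + |a₁| + |a₂|)/a₃ := by positivity
      linarith
    · field_simp
  have hle0 := neg_abs_le a₀
  have hle0' := le_abs_self a₀
  have hle1 := neg_abs_le a₁
  have hle1' := le_abs_self a₁
  have hle2 := neg_abs_le a₂
  have hle2' := le_abs_self a₂
  set g : ℝ → ℝ := fun t => a₃*t^3 + a₂*t^2 + a₁*t + a₀ with hg
  have hpos : 0 ≤ g M := by
    simp only [hg]
    nlinarith [sq_nonneg M, mul_pos ha₃ (by linarith : (0:ℝ) < M)]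
  have hneg : g (-M) ≤ 0 := by
    simp only [hg]
    nlinarith [sq_nonneg M, mul_pos ha₃ (by linarith : (0:ℝ) < M)]
  have hcont : ContinuousOn g (Set.Icc (-M) M) := by
    apply Continuous.continuousOn
    continuity
  have hsub := intermediate_value_Icc (by linarith : -M ≤ M) hcont
  obtain ⟨r, _, hr⟩ := hsub ⟨hneg, hpos⟩
  exact ⟨r, hr⟩

theorem cubic_hurwitz (a₀ a₁ a₂ a₃ : ℝ) (ha₃ : 0 < a₃) :
    (∀ z : ℂ, (a₃ : ℂ) * z ^ 3 + (a₂ : ℂ) * z ^ 2 + (a₁ : ℂ) * z + (a₀ : ℂ) = 0 → z.re ≤ 0) ↔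
      (0 ≤ a₂ ∧ 0 ≤ a₁ ∧ 0 ≤ a₀ ∧ 0 ≤ a₁ * a₂ - a₀ * a₃) := by
  constructor
  · intro H
    obtain ⟨r, hfr⟩ := exists_real_root a₀ a₁ a₂ a₃ ha₃
    have hfr' : (a₃:ℂ)*(r:ℂ)^3 + (a₂:ℂ)*(r:ℂ)^2 + (a₁:ℂ)*(r:ℂ) + (a₀:ℂ) = 0 := by
      exact_mod_cast congrArg (fun t : ℝ => (t:ℂ)) hfr
    have hr0 : r ≤ 0 := by simpa using H (r:ℂ) hfr'
    set B : ℝ := a₂ + a₃*r with hBdef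
    set C : ℝ := a₁ + a₂*r + a₃*r^2 with hCdef
    clear_value B C
    have h2a : (0:ℝ) < 2*a₃ := by linarith
    have hfac : ∀ z : ℂ, (a₃:ℂ)*z^2 + (B:ℂ)*z + (C:ℂ) = 0 →
        (a₃:ℂ)*z^3 + (a₂:ℂ)*z^2 + (a₁:ℂ)*z + (a₀:ℂ) = 0 := by
      intro z hq
      have hB' : (B:ℂ) = (a₂:ℂ) + (a₃:ℂ)*(r:ℂ) := by rw [hBdef]; push_cast; ring
      have hC' : (C:ℂ) = (a₁:ℂ) + (a₂:ℂ)*(r:ℂ) + (a₃:ℂ)*(r:ℂ)^2 := by rw [hCdef]; push_cast; ring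
      rw [hB', hC'] at hq
      linear_combination (z - (r:ℂ)) * hq + hfr'
    have hBC : 0 ≤ B ∧ 0 ≤ C := by
      rcases le_or_gt (4*a₃*C) (B^2) with hD | hD
      · -- real roots of the quadratic
        set s : ℝ := Real.sqrt (B^2 - 4*a₃*C) with hsdef
        have hs0 : 0 ≤ s := Real.sqrt_nonneg _
        have hs2 : s^2 = B^2 - 4*a₃*C := Real.sq_sqrt (by linarith)
        set r₂ : ℝ := (-B + s)/(2*a₃) with hr₂def
        have hmul : 2*a₃*r₂ = -B + s := by rw [hr₂def]; field_simp
        have key : 4*a₃*(a₃*r₂^2 + B*r₂ + C) = 0 := by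
          linear_combination (2*a₃*r₂ + B + s) * hmul + hs2
        have hq : a₃*r₂^2 + B*r₂ + C = 0 :=
          (mul_eq_zero.1 key).resolve_left (by positivity)
        have hq' : (a₃:ℂ)*(r₂:ℂ)^2 + (B:ℂ)*(r₂:ℂ) + (C:ℂ) = 0 := by
          exact_mod_cast congrArg (fun t : ℝ => (t:ℂ)) hq
        have hr₂0 : r₂ ≤ 0 := by simpa using H (r₂:ℂ) (hfac _ hq')
        have hnum : -B + s ≤ 0 := by
          rw [← hmul]
          exact mul_nonpos_of_nonneg_of_nonpos h2a.le hr₂0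
        have hB0 : 0 ≤ B := by linarith
        have hC0 : 0 ≤ C := by nlinarith
        exact ⟨hB0, hC0⟩
      · -- complex conjugate roots
        set t : ℝ := Real.sqrt (4*a₃*C - B^2) with htdef
        have ht2 : t^2 = 4*a₃*C - B^2 := Real.sq_sqrt (by linarith)
        set x : ℝ := -B/(2*a₃) with hxdef
        set y : ℝ := t/(2*a₃) with hydef
        have hxm : 2*a₃*x = -B := by rw [hxdef]; field_simp
        have hym : 2*a₃*y = t := by rw [hydef]; field_simp
        have key1 : (2*a₃)^2*(a₃*(x^2 - y^2) + B*x + C) = 0 := by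
          linear_combination (2*a₃*x - B)*a₃*hxm - a₃*(2*a₃*y + t)*hym + 2*a₃*B*hxm - a₃*ht2
        have h1 : a₃*(x^2 - y^2) + B*x + C = 0 :=
          (mul_eq_zero.1 key1).resolve_left (by positivity)
        have h2 : 2*a₃*x*y + B*y = 0 := by
          have : (2*a₃*x + B) * y = 0 := by rw [hxm]; ring
          linear_combination this
        set z : ℂ := (x:ℂ) + (y:ℂ)*Complex.I with hzdef
        have h1' : (a₃:ℂ)*((x:ℂ)^2 - (y:ℂ)^2) + (B:ℂ)*(x:ℂ) + (C:ℂ) = 0 := by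
          exact_mod_cast congrArg (fun u : ℝ => (u:ℂ)) h1
        have h2' : 2*(a₃:ℂ)*(x:ℂ)*(y:ℂ) + (B:ℂ)*(y:ℂ) = 0 := by
          exact_mod_cast congrArg (fun u : ℝ => (u:ℂ)) h2
        have hq : (a₃:ℂ)*z^2 + (B:ℂ)*z + (C:ℂ) = 0 := by
          rw [hzdef]
          linear_combination h1' + Complex.I * h2' + (a₃:ℂ)*(y:ℂ)^2 * Complex.I_sq
        have hzre : z.re = x := by simp [hzdef]
        have hx0 : x ≤ 0 := by rw [← hzre]; exact H z (hfac _ hq)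
        have hB0 : 0 ≤ B := by
          have : 2*a₃*x ≤ 0 := mul_nonpos_of_nonneg_of_nonpos h2a.le hx0
          rw [hxm] at this; linarith
        have hC0 : 0 ≤ C := by nlinarith [sq_nonneg B]
        exact ⟨hB0, hC0⟩
    obtain ⟨hB0, hC0⟩ := hBC
    have e2 : a₂ = B - a₃*r := by rw [hBdef]; ring
    have e1 : a₁ = C - r*B := by rw [hCdef, hBdef]; ring
    have e0 : a₀ = -(r*C) := by rw [hCdef]; linear_combination hfr
    rw [e2, e1, e0]
    have hnr : 0 ≤ -r := by linarith
    refine ⟨?_, ?_, ?_, ?_⟩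
    · nlinarith [mul_nonneg ha₃.le hnr]
    · nlinarith [mul_nonneg hnr hB0]
    · nlinarith [mul_nonneg hnr hC0]
    · nlinarith [mul_nonneg hB0 hC0, mul_nonneg (mul_nonneg hB0 hB0) hnr,
        mul_nonneg (mul_nonneg hB0 ha₃.le) (sq_nonneg r)]
  · rintro ⟨h2, h1, h0, hd⟩ z hz
    by_contra hx
    push_neg at hx
    set x := z.re with hxd
    set y := z.im with hyd
    have hre := congrArg Complex.re hz
    have him := congrArg Complex.im hz
    simp [pow_succ, Complex.mul_re, Complex.mul_im] at hre him
    have hRe : a₃*x^3 - 3*a₃*x*y^2 + a₂*x^2 - a₂*y^2 + a₁*x + a₀ = 0 := by linear_combination hre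
    by_cases hy : y = 0
    · rw [hy] at hRe
      nlinarith [pow_pos hx 3, mul_pos ha₃ (pow_pos hx 3), mul_nonneg h2 (sq_nonneg x),
        mul_nonneg h1 hx.le]
    · have hE : 3*a₃*x^2 - a₃*y^2 + 2*a₂*x + a₁ = 0 := by
        rcases mul_eq_zero.1 (show y * (3*a₃*x^2 - a₃*y^2 + 2*a₂*x + a₁) = 0 from by
          linear_combination him) with h | h
        · exact absurd h hy
        · exact h
      have key : 8*a₃^2*x^3 + 8*a₂*a₃*x^2 + 2*a₁*a₃*x + 2*a₂^2*x + (a₁*a₂ - a₀*a₃) = 0 := by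
        linear_combination (3*a₃*x + a₂) * hE - a₃ * hRe
      nlinarith [mul_pos (mul_pos ha₃ ha₃) (pow_pos hx 3),
        mul_nonneg (mul_nonneg h2 ha₃.le) (sq_nonneg x),
        mul_nonneg (mul_nonneg h1 ha₃.le) hx.le,
        mul_nonneg (mul_nonneg h2 h2) hx.le]
end

section
/- Let Jₘ, K > 0 and let Bₘ, Gₘ, Gₜ be real numbers with α = GₘGₜ. Define Z(s) = (JₘK·s + (Bₘ+Gₘ)K) / (Jₘ·s² + (Bₘ+Gₘ)·s + (1+α)K). If (Bₘ+Gₘ) ≥ 0 and α+1 ≥ 0, then Re(Z(iω)) ≥ 0 for every real ω with Jₘ(iω)² + (Bₘ+Gₘ)(iω) + (1+α)K ≠ 0. -/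
open Complex

theorem sea_pp_null_re_nonneg (Jm K Bm Gm Gt : ℝ) (hJ : 0 < Jm) (hK : 0 < K)
    (α : ℝ) (hα : α = Gm * Gt)
    (h₁ : 0 ≤ Bm + Gm) (h₂ : 0 ≤ α + 1) :
    ∀ ω : ℝ,
      (Jm : ℂ) * (Complex.I * ω) ^ 2 + ((Bm : ℂ) + Gm) * (Complex.I * ω) +
          (1 + (α : ℂ)) * K ≠ 0 →
      0 ≤ (((Jm : ℂ) * K * (Complex.I * ω) + ((Bm : ℂ) + Gm) * K) /
        ((Jm : ℂ) * (Complex.I * ω) ^ 2 + ((Bm : ℂ) + Gm) * (Complex.I * ω) +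
          (1 + (α : ℂ)) * K)).re := by
  intro ω hD
  have hsq : 0 < Complex.normSq ((Jm : ℂ) * (Complex.I * ω) ^ 2 + ((Bm : ℂ) + Gm) * (Complex.I * ω) +
          (1 + (α : ℂ)) * K) := Complex.normSq_pos.mpr hD
  rw [Complex.div_re]
  simp only [Complex.add_re, Complex.add_im, Complex.mul_re, Complex.mul_im,
    Complex.ofReal_re, Complex.ofReal_im, Complex.I_re, Complex.I_im, pow_two,
    Complex.one_re, Complex.one_im]
  ring_nf
  have hn : 0 ≤ (Complex.normSq ((Jm:ℂ) * I ^ 2 * (ω:ℂ) ^ 2 + I * ω * Bm + I * ω * Gm + (α:ℂ) * K + K))⁻¹ :=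
    inv_nonneg.mpr (Complex.normSq_nonneg _)
  nlinarith [mul_nonneg (mul_nonneg (mul_nonneg h₁ h₂) (sq_nonneg K)) hn]
end

section
/- Let Jₘ, K > 0, Bₘ, Gₘ, Gₜ, K_d real, α = GₘGₜ. Define N(s) = JₘK·s² + (Bₘ+Gₘ)K·s + αKK_d and D(s) = Jₘs³ + (Bₘ+Gₘ)s² + (α+1)K·s. Then Re(N(iω)·D(-iω)) = d₂ω² where d₂ = (Bₘ+Gₘ)(K²(α+1) - αKK_d), and d₂ ≥ 0 holds (assuming Bₘ+Gₘ ≥ 0 and α+1 > 0) if and only if K ≥ (α/(α+1))K_d. -/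
open Complex

theorem sea_pp_spring_re_formula (Jm K Bm Gm Gt Kd : ℝ) (hJ : 0 < Jm) (hK : 0 < K)
    (α : ℝ) (hα : α = Gm * Gt)
    (d₂ : ℝ) (hd₂ : d₂ = (Bm + Gm) * (K ^ 2 * (α + 1) - α * K * Kd)) :
    (∀ ω : ℝ,
      (((Jm : ℂ) * K * (Complex.I * ω) ^ 2 + ((Bm : ℂ) + Gm) * K * (Complex.I * ω) +
          (α : ℂ) * K * Kd) *
        ((Jm : ℂ) * (-(Complex.I * ω)) ^ 3 + ((Bm : ℂ) + Gm) * (-(Complex.I * ω)) ^ 2 +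
          ((α : ℂ) + 1) * K * (-(Complex.I * ω)))).re = d₂ * ω ^ 2) ∧
    (0 ≤ Bm + Gm → 0 < α + 1 → (0 ≤ d₂ ↔ K ≥ (α / (α + 1)) * Kd) ∨
      (Bm + Gm = 0 ∧ d₂ = 0)) := by
  constructor
  · intro ω
    rw [hd₂]
    simp [Complex.mul_re, Complex.mul_im, pow_succ, pow_zero]
    ring
  · intro hBG hα1
    rcases eq_or_lt_of_le hBG with h | h
    · right
      refine ⟨h.symm, by rw [hd₂, ← h]; ring⟩
    · left
      rw [hd₂]
      rw [mul_nonneg_iff_of_pos_left h]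
      rw [ge_iff_le, div_mul_eq_mul_div, div_le_iff₀ hα1, sub_nonneg]
      constructor
      · intro hh
        nlinarith
      · intro hh
        nlinarith
end

section
/- Let Jₘ, K, B_f > 0, Bₘ, Gₘ real with α real. If Bₘ+Gₘ ≥ 0 and α+1 ≥ 0, then for all real ω, B_fJₘ²ω⁴ + B_f(Bₘ+Gₘ)(Bₘ+Gₘ+B_f(α+1))ω² + K²(α+1)(Bₘ+Gₘ) ≥ 0. Conversely, if this quartic in ω is nonnegative for all real ω, then (α+1)(Bₘ+Gₘ) ≥ 0 and (Bₘ+Gₘ)(Bₘ+Gₘ+B_f(α+1)) ≥ 0. -/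
theorem sdea_pp_null_quartic_nonneg (Jm K Bf Bm Gm α : ℝ)
    (hJ : 0 < Jm) (hK : 0 < K) (hBf : 0 < Bf) :
    ((0 ≤ Bm + Gm → 0 ≤ α + 1 → ∀ ω : ℝ,
      0 ≤ Bf * Jm ^ 2 * ω ^ 4 +
          Bf * (Bm + Gm) * (Bm + Gm + Bf * (α + 1)) * ω ^ 2 +
          K ^ 2 * (α + 1) * (Bm + Gm)) ∧
    ((∀ ω : ℝ,
      0 ≤ Bf * Jm ^ 2 * ω ^ 4 +
          Bf * (Bm + Gm) * (Bm + Gm + Bf * (α + 1)) * ω ^ 2 +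
          K ^ 2 * (α + 1) * (Bm + Gm)) →
      0 ≤ (α + 1) * (Bm + Gm) ∧ 0 ≤ (Bm + Gm) * (Bm + Gm + Bf * (α + 1)))) := by
  constructor
  · intro hS hT ω
    have h1 : 0 ≤ Bf * Jm ^ 2 * ω ^ 4 := by positivity
    have h2 : 0 ≤ Bf * (Bm + Gm) * (Bm + Gm + Bf * (α + 1)) * ω ^ 2 := by
      have : 0 ≤ Bm + Gm + Bf * (α + 1) := by positivity
      positivity
    have h3 : 0 ≤ K ^ 2 * (α + 1) * (Bm + Gm) := by positivity
    linarith
  · intro h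
    have h0 := h 0
    simp at h0
    have hTS : 0 ≤ (α + 1) * (Bm + Gm) := by nlinarith [pow_pos hK 2]
    refine ⟨hTS, ?_⟩
    nlinarith [sq_nonneg (Bm + Gm)]
end

section
/- Let Jₘ, K, B_f > 0, Bₘ, Gₘ real with Bₘ+Gₘ > 0, α real with α+1 > 0, K_d real with K ≥ (α/(α+1))K_d and (α/(α+1))K_d > 0. If JₘK/B_f ≤ Bₘ+Gₘ (i.e., Jₘ ≤ (Bₘ+Gₘ)B_f/K), then B_f((Bₘ+Gₘ)(B_f(1+α)+Bₘ+Gₘ) - αJₘK_d) ≥ -2Jₘ√(B_fK(Bₘ+Gₘ)(K+α(K-K_d))). -/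
theorem sdea_spring_feasibility_implies_sturm (Jm K Bf Bm Gm α Kd : ℝ)
    (hJ : 0 < Jm) (hK : 0 < K) (hBf : 0 < Bf)
    (hBG : 0 < Bm + Gm) (hα1 : 0 < α + 1)
    (hK1 : K ≥ (α / (α + 1)) * Kd) (hK2 : 0 < (α / (α + 1)) * Kd)
    (h : Jm * K / Bf ≤ Bm + Gm) :
    -2 * Jm * Real.sqrt (Bf * K * (Bm + Gm) * (K + α * (K - Kd))) ≤
      Bf * ((Bm + Gm) * (Bf * (1 + α) + Bm + Gm) - α * Jm * Kd) := by
  have hαKd : 0 < α * Kd := by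
    have h' : 0 < (α * Kd) / (α + 1) := by
      have : (α / (α + 1)) * Kd = (α * Kd) / (α + 1) := by ring
      linarith [this ▸ hK2]
    exact (div_pos_iff.mp h').resolve_right (fun ⟨_, hneg⟩ => absurd hα1 (not_lt.mpr hneg.le)) |>.1
  have hαK : α * Kd ≤ (α + 1) * K := by
    have h1 := mul_le_mul_of_nonneg_left hK1 hα1.le
    have h2 : (α + 1) * (α / (α + 1) * Kd) = α * Kd := by
      field_simp
    linarith [h2 ▸ h1]
  have hJK : Jm * K ≤ (Bm + Gm) * Bf := by
    have := (div_le_iff₀ hBf).mp h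
    linarith
  have hbound : α * Jm * Kd ≤ (Bm + Gm) * Bf * (α + 1) := by
    have h1 : Jm * (α * Kd) ≤ Jm * ((α + 1) * K) := by
      exact mul_le_mul_of_nonneg_left hαK hJ.le
    nlinarith [mul_le_mul_of_nonneg_right hJK hα1.le]
  have hs := Real.sqrt_nonneg (Bf * K * (Bm + Gm) * (K + α * (K - Kd)))
  nlinarith [hbound, mul_nonneg hJ.le hs, mul_nonneg hBf.le (sq_nonneg (Bm + Gm)),
    mul_le_mul_of_nonneg_left hbound hBf.le]
end
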